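/- arXiv:2509.09425 — 6 statements merged into one kernel-verified Lean document; each statement's English description precedes it below -/
import Mathlib

section
/- Let m ≥ 3 and n ≥ 1 be integers, let i ∈ Z/mZ and j ∈ {1,…,n}, and let x be any vertex of P_m(n) lying in V_{i,j}. Then for every i′ ∈ Z/mZ and j′ ∈ {1,…,n}, the number of neighbours of x in V_{i′,j′} equals: 2(j−1) if (i′, j′) = (i, j); 1 if i′ = i+1 (mod m) or i′ = i−1 (mod m), and j + j′ ≤ n + 1; and 0 otherwise. In particular, the partition {V_{i,j}} of the vertex set of P_m(n) is equitable with quotient matrix the mn × mn block circulant matrix circ(2D_n, E_n, O, …, O, E_n) (with m − 3 zero blocks). -/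
open Polynomial

/-- An `m`-coloured permutation of `{1, …, n}`: a pair `(χ, ψ)` of a colour
function `χ : [n] → ℤ/mℤ` and a permutation `ψ` of `[n]` (positions and letters
are 0-indexed, so the letter `1` of the paper corresponds to `0 : Fin n`). -/
abbrev ColouredPerm (m n : ℕ) := (Fin n → ZMod m) × Equiv.Perm (Fin n)

/-- The map on positions underlying reversal of the prefix of length `k`
(for `1 ≤ k ≤ n`; it is the identity outside this range of `k`). -/
def flipFun (n k : ℕ) : Fin n → Fin n := fun t =>
  if h : t.val < k ∧ k ≤ n then ⟨k - 1 - t.val, by omega⟩ else t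

theorem flipFun_involutive (n k : ℕ) : Function.Involutive (flipFun n k) := by
  intro t
  unfold flipFun
  by_cases h : t.val < k ∧ k ≤ n
  · rw [dif_pos h, dif_pos (by simp only [Fin.val_mk]; omega)]
    apply Fin.ext
    simp only [Fin.val_mk]
    omega
  · rw [dif_neg h, dif_neg h]

/-- Reversal of the prefix of length `k`, as a permutation of positions. -/
def flipPerm (n k : ℕ) : Equiv.Perm (Fin n) := (flipFun_involutive n k).toPerm

/-- The prefix reversal `r_k^ε` acting on `m`-coloured permutations: it
reverses the prefix of length `k` and adds `ε` to the colours in that prefix. -/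
def prefixRev (m n : ℕ) (k : ℕ) (ε : ZMod m) (σ : ColouredPerm m n) :
    ColouredPerm m n :=
  (fun t => if t.val < k then σ.1 (flipPerm n k t) + ε else σ.1 t,
   σ.2 * flipPerm n k)

/-- Adjacency in the generalised pancake graph: two distinct coloured
permutations are adjacent iff one is obtained from the other by a prefix
reversal `r_k^ε` with `1 ≤ k ≤ n` and `ε ∈ {+1, -1}`. -/
def pancakeAdj (m n : ℕ) (σ τ : ColouredPerm m n) : Prop :=
  σ ≠ τ ∧ ∃ k, 1 ≤ k ∧ k ≤ n ∧ ∃ ε : ZMod m, (ε = 1 ∨ ε = -1) ∧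
    (τ = prefixRev m n k ε σ ∨ σ = prefixRev m n k ε τ)

/-- The generalised pancake graph `𝒫_m(n)`. -/
def pancakeGraph (m n : ℕ) : SimpleGraph (ColouredPerm m n) where
  Adj := pancakeAdj m n
  symm := by
    constructor
    rintro a b ⟨hab, k, hk1, hk2, ε, hε, h⟩
    exact ⟨hab.symm, k, hk1, hk2, ε, hε, h.symm⟩
  loopless := by constructor; rintro a ⟨h, -⟩; exact h rfl

open Classical in
/-- The (real) adjacency matrix of the generalised pancake graph `𝒫_m(n)`. -/
noncomputable def pancakeAdjMatrix (m n : ℕ) :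
    Matrix (ColouredPerm m n) (ColouredPerm m n) ℝ :=
  Matrix.of fun σ τ => if pancakeAdj m n σ τ then 1 else 0

/-- The `i`-th largest eigenvalue (`i = 1, 2, …`) of a real matrix `M`,
i.e. the `i`-th largest root of its characteristic polynomial, counted
with multiplicity (junk value `0` if there are fewer than `i` real roots). -/
noncomputable def nthLargestEig {V : Type*} [Fintype V] [DecidableEq V]
    (M : Matrix V V ℝ) (i : ℕ) : ℝ :=
  ((M.charpoly.roots.sort (· ≤ ·)).reverse).getD (i - 1) 0

/-- The diagonal matrix `D_n = diag(0, 1, …, n-1)`. -/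
noncomputable def Dmat (n : ℕ) : Matrix (Fin n) (Fin n) ℝ :=
  Matrix.diagonal fun j => (j.val : ℝ)

/-- The 0/1 matrix `E_n`, whose `(i, j)` entry (1-indexed) is `1` iff
`i + j ≤ n + 1`. -/
noncomputable def Emat (n : ℕ) : Matrix (Fin n) (Fin n) ℝ :=
  Matrix.of fun j j' => if (j.val + 1) + (j'.val + 1) ≤ n + 1 then 1 else 0

/-- The `mn × mn` block circulant matrix `circ(B_0, …, B_{m-1})` whose
`(r, s)` block is `B_{s - r mod m}`. -/
def blockCirc (m n : ℕ) (B : ZMod m → Matrix (Fin n) (Fin n) ℝ) :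
    Matrix (ZMod m × Fin n) (ZMod m × Fin n) ℝ :=
  Matrix.of fun p q => B (q.1 - p.1) p.2 q.2

/-- The part `V_{i,j}` of the vertex set of `𝒫_m(n)`: those coloured
permutations in which the letter `1` (here `0 : Fin n`) occupies position `j`
with colour `i`. -/
def Vpart (m n : ℕ) (i : ZMod m) (j : Fin n) : Set (ColouredPerm m n) :=
  {σ | σ.2 j = ⟨0, j.pos⟩ ∧ σ.1 j = i}

/-! A neighbour of `x` is `r_k^ε x` for a unique pair `(k, ε)` with `1 ≤ k ≤ n` and `ε = ±1`: the
length `k` is read off from where the first position goes, and `ε` from the colour change there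
(for `m ≥ 3` the shifts `1` and `-1` are distinct and nonzero). If the letter `1` of `x` sits at
position `j` (1-indexed) with colour `i`, then `r_k^ε` fixes its position and colour when `k < j`,
and otherwise moves it to position `k + 1 - j` with colour `i + ε`. So the `2(j - 1)` reversals
with `k < j` stay in `V_{i,j}`, and each `V_{i ± 1, j'}` with `j + j' ≤ n + 1` is hit by exactly one
of the others. -/

def pancakeQuotientEntry (m n : ℕ) (i : ZMod m) (j : Fin n) (i' : ZMod m) (j' : Fin n) : ℕ :=
  if i' = i ∧ j' = j then 2 * j.val
  else if (i' = i + 1 ∨ i' = i - 1) ∧ (j.val + 1) + (j'.val + 1) ≤ n + 1 then 1 else 0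

section

variable {m n : ℕ}

lemma ne_zero_of_eq_one_or_eq_neg_one {R : Type*} [Ring R] [Nontrivial R] {ε : R}
    (h : ε = 1 ∨ ε = -1) : ε ≠ 0 := by
  rcases h with rfl | rfl <;> simp

lemma sub_eq_one_or_sub_eq_neg_one_iff {G : Type*} [AddCommGroup G] [One G] {a b : G} :
    (a - b = 1 ∨ a - b = -1) ↔ (a = b + 1 ∨ a = b - 1) := by
  rw [sub_eq_iff_eq_add', sub_eq_iff_eq_add', ← sub_eq_add_neg]

lemma flipFun_of_lt {k : ℕ} {t : Fin n} (ht : t.val < k) (hk : k ≤ n) :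
    flipFun n k t = ⟨k - 1 - t.val, by omega⟩ :=
  dif_pos ⟨ht, hk⟩

lemma flipFun_of_not_lt {k : ℕ} {t : Fin n} (ht : ¬ t.val < k) : flipFun n k t = t :=
  dif_neg fun h => ht h.1

lemma flipFun_val_lt {k : ℕ} {t : Fin n} (ht : t.val < k) : (flipFun n k t).val < k := by
  unfold flipFun
  split_ifs
  · exact Nat.sub_one_sub_lt_of_lt ht
  · exact ht

lemma flipPerm_apply (n k : ℕ) (t : Fin n) : flipPerm n k t = flipFun n k t := rfl

lemma flipPerm_mul_self (n k : ℕ) : flipPerm n k * flipPerm n k = 1 :=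
  Equiv.ext (flipFun_involutive n k)

lemma flipPerm_one (n : ℕ) : flipPerm n 1 = 1 := Equiv.ext fun t => by
  rw [flipPerm_apply, Equiv.Perm.one_apply, flipFun]
  split_ifs with h
  · exact Fin.ext (show 1 - 1 - t.val = t.val by omega)
  · rfl

lemma flipPerm_apply_zero {k : ℕ} (hk1 : 1 ≤ k) (hk : k ≤ n) :
    flipPerm n k ⟨0, by omega⟩ = ⟨k - 1, by omega⟩ := by
  rw [flipPerm_apply, flipFun_of_lt (by simp only; omega) hk]
  rfl

lemma prefixRev_one_zero (σ : ColouredPerm m n) : prefixRev m n 1 0 σ = σ := by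
  simp [prefixRev, flipPerm_one]

lemma prefixRev_neg_prefixRev (k : ℕ) (ε : ZMod m) (σ : ColouredPerm m n) :
    prefixRev m n k (-ε) (prefixRev m n k ε σ) = σ := by
  refine Prod.ext (funext fun t => ?_) ?_
  · by_cases ht : t.val < k
    · simp [prefixRev, ht, flipPerm_apply, flipFun_val_lt ht, flipFun_involutive n k t]
    · simp [prefixRev, ht]
  · simp [prefixRev, mul_assoc, flipPerm_mul_self]

lemma prefixRev_injOn (σ : ColouredPerm m n) :
    Set.InjOn (fun p : ℕ × ZMod m => prefixRev m n p.1 p.2 σ) {p | 1 ≤ p.1 ∧ p.1 ≤ n} := by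
  rintro ⟨k, ε⟩ ⟨hk1, hk⟩ ⟨k', ε'⟩ ⟨hk1', hk'⟩ h
  have hflip : flipPerm n k = flipPerm n k' := mul_left_cancel (congrArg Prod.snd h)
  have hkk : k = k' := by
    have h0 := congrArg Fin.val (DFunLike.congr_fun hflip ⟨0, by omega⟩)
    rw [flipPerm_apply_zero hk1 hk, flipPerm_apply_zero hk1' hk'] at h0
    simp only at h0
    omega
  subst hkk
  have h0 := congrFun (congrArg Prod.fst h) ⟨0, by omega⟩
  simp only [prefixRev, show 0 < k by omega, if_true] at h0
  exact Prod.ext rfl (add_left_cancel h0)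

lemma prefixRev_ne {k : ℕ} (hk1 : 1 ≤ k) (hk : k ≤ n) {ε : ZMod m} (hε : ε ≠ 0)
    (σ : ColouredPerm m n) : prefixRev m n k ε σ ≠ σ := by
  intro h
  conv_rhs at h => rw [← prefixRev_one_zero σ]
  have hkε : (k, ε) = (1, 0) :=
    prefixRev_injOn σ (show 1 ≤ k ∧ k ≤ n from ⟨hk1, hk⟩)
      (show 1 ≤ 1 ∧ 1 ≤ n from ⟨le_rfl, by omega⟩) h
  exact hε (Prod.ext_iff.mp hkε).2

lemma pancakeGraph_adj_iff [Nontrivial (ZMod m)] {x y : ColouredPerm m n} :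
    (pancakeGraph m n).Adj x y ↔
      ∃ k, 1 ≤ k ∧ k ≤ n ∧ ∃ ε : ZMod m, (ε = 1 ∨ ε = -1) ∧ y = prefixRev m n k ε x := by
  constructor
  · rintro ⟨-, k, hk1, hk, ε, hε, rfl | rfl⟩
    · exact ⟨k, hk1, hk, ε, hε, rfl⟩
    · refine ⟨k, hk1, hk, -ε, by rcases hε with rfl | rfl <;> simp, ?_⟩
      exact (prefixRev_neg_prefixRev k ε y).symm
  · rintro ⟨k, hk1, hk, ε, hε, rfl⟩
    exact ⟨(prefixRev_ne hk1 hk (ne_zero_of_eq_one_or_eq_neg_one hε) x).symm,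
      k, hk1, hk, ε, hε, Or.inl rfl⟩

lemma ncard_adj_inter_eq [Nontrivial (ZMod m)] (x : ColouredPerm m n)
    (V : Set (ColouredPerm m n)) :
    {y | (pancakeGraph m n).Adj x y ∧ y ∈ V}.ncard =
      {p : ℕ × ZMod m | 1 ≤ p.1 ∧ p.1 ≤ n ∧ (p.2 = 1 ∨ p.2 = -1) ∧
        prefixRev m n p.1 p.2 x ∈ V}.ncard := by
  have himage : {y | (pancakeGraph m n).Adj x y ∧ y ∈ V} =
      (fun p : ℕ × ZMod m => prefixRev m n p.1 p.2 x) ''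
        {p | 1 ≤ p.1 ∧ p.1 ≤ n ∧ (p.2 = 1 ∨ p.2 = -1) ∧ prefixRev m n p.1 p.2 x ∈ V} := by
    ext y
    simp only [Set.mem_ofPred_eq, Set.mem_image, pancakeGraph_adj_iff, Prod.exists]
    constructor
    · rintro ⟨⟨k, hk1, hk, ε, hε, rfl⟩, hy⟩
      exact ⟨k, ε, ⟨hk1, hk, hε, hy⟩, rfl⟩
    · rintro ⟨k, ε, ⟨hk1, hk, hε, hy⟩, rfl⟩
      exact ⟨⟨k, hk1, hk, ε, hε, rfl⟩, hy⟩
  rw [himage]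
  refine Set.InjOn.ncard_image (Set.InjOn.mono ?_ (prefixRev_injOn x))
  exact fun _ hp => ⟨hp.1, hp.2.1⟩

/-- With 0-indexed positions, a reversal of length `k > j` moves the letter `0` from position `j`
to position `k - 1 - j`. -/
lemma prefixRev_mem_Vpart_iff {i : ZMod m} {j : Fin n} {x : ColouredPerm m n}
    (hx : x ∈ Vpart m n i j) (i' : ZMod m) (j' : Fin n) {k : ℕ} (hk1 : 1 ≤ k) (hk : k ≤ n)
    (ε : ZMod m) :
    prefixRev m n k ε x ∈ Vpart m n i' j' ↔
      (k ≤ j.val ∧ j' = j ∧ i' = i) ∨ (k = j.val + j'.val + 1 ∧ i' = i + ε) := by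
  obtain ⟨hψ, hχ⟩ := hx
  have hψ_iff : ∀ a : Fin n, x.2 a = ⟨0, j'.pos⟩ ↔ a = j := fun a => by
    rw [show (⟨0, j'.pos⟩ : Fin n) = ⟨0, j.pos⟩ from rfl, ← hψ, x.2.apply_eq_iff_eq]
  show (x.2 (flipPerm n k j') = ⟨0, j'.pos⟩ ∧
      (if j'.val < k then x.1 (flipPerm n k j') + ε else x.1 j') = i') ↔ _
  by_cases hj' : j'.val < k
  · rw [if_pos hj', flipPerm_apply, flipFun_of_lt hj' hk, hψ_iff]
    constructor
    · rintro ⟨ha, rfl⟩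
      have hv : k - 1 - j'.val = j.val := congrArg Fin.val ha
      exact Or.inr ⟨by omega, by rw [ha, hχ]⟩
    · rintro (⟨hkj, rfl, -⟩ | ⟨rfl, rfl⟩)
      · omega
      · have ha : (⟨j.val + j'.val + 1 - 1 - j'.val, by omega⟩ : Fin n) = j := Fin.ext (by simp)
        exact ⟨ha, by rw [ha, hχ]⟩
  · rw [if_neg hj', flipPerm_apply, flipFun_of_not_lt hj', hψ_iff]
    constructor
    · rintro ⟨rfl, rfl⟩
      exact Or.inl ⟨by omega, rfl, hχ⟩
    · rintro (⟨-, rfl, rfl⟩ | ⟨rfl, -⟩)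
      · exact ⟨rfl, hχ⟩
      · omega

/-- The reversals `(k, ε)` that take a vertex of `V_{i,j}` into `V_{i',j'}`. -/
def reversalsInto (m n : ℕ) (i : ZMod m) (j : Fin n) (i' : ZMod m) (j' : Fin n) :
    Set (ℕ × ZMod m) :=
  {p | 1 ≤ p.1 ∧ p.1 ≤ n ∧ (p.2 = 1 ∨ p.2 = -1) ∧
    ((p.1 ≤ j.val ∧ j' = j ∧ i' = i) ∨ (p.1 = j.val + j'.val + 1 ∧ i' = i + p.2))}

lemma reversalsInto_self [Nontrivial (ZMod m)] (i : ZMod m) (j : Fin n) :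
    reversalsInto m n i j i j = ↑(Finset.Icc 1 j.val ×ˢ ({1, -1} : Finset (ZMod m))) := by
  ext ⟨k, ε⟩
  simp only [reversalsInto, Set.mem_ofPred_eq, Finset.coe_product, Set.mem_prod,
    Finset.coe_Icc, Set.mem_Icc, Finset.coe_pair, Set.mem_insert_iff, Set.mem_singleton_iff,
    and_self, and_true, left_eq_add]
  constructor
  · rintro ⟨hk1, -, hε, hkj | ⟨-, hε0⟩⟩
    · exact ⟨⟨hk1, hkj⟩, hε⟩
    · exact absurd hε0 (ne_zero_of_eq_one_or_eq_neg_one hε)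
  · rintro ⟨⟨hk1, hkj⟩, hε⟩
    exact ⟨hk1, by omega, hε, Or.inl hkj⟩

lemma reversalsInto_of_sub_eq [Nontrivial (ZMod m)] {i i' : ZMod m} {j j' : Fin n}
    (hshift : i' - i = 1 ∨ i' - i = -1) (hlen : j.val + j'.val + 1 ≤ n) :
    reversalsInto m n i j i' j' = {(j.val + j'.val + 1, i' - i)} := by
  have hne : i' ≠ i := sub_ne_zero.mp (ne_zero_of_eq_one_or_eq_neg_one hshift)
  ext ⟨k, ε⟩
  simp only [reversalsInto, Set.mem_ofPred_eq, Set.mem_singleton_iff, Prod.mk.injEq]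
  constructor
  · rintro ⟨-, -, -, ⟨-, -, hii⟩ | ⟨hk, rfl⟩⟩
    · exact absurd hii hne
    · exact ⟨hk, (add_sub_cancel_left i ε).symm⟩
  · rintro ⟨rfl, rfl⟩
    exact ⟨by omega, hlen, hshift, Or.inr ⟨rfl, (add_sub_cancel i i').symm⟩⟩

lemma reversalsInto_eq_empty {i i' : ZMod m} {j j' : Fin n} (hself : ¬(i' = i ∧ j' = j))
    (hnbr : ¬((i' = i + 1 ∨ i' = i - 1) ∧ (j.val + 1) + (j'.val + 1) ≤ n + 1)) :
    reversalsInto m n i j i' j' = ∅ := by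
  refine Set.eq_empty_of_forall_notMem ?_
  rintro ⟨k, ε⟩ ⟨-, hk, hε, ⟨-, hj, hi⟩ | ⟨rfl, rfl⟩⟩
  · exact hself ⟨hi, hj⟩
  · refine hnbr ⟨?_, by omega⟩
    rcases hε with rfl | rfl
    · exact Or.inl rfl
    · exact Or.inr (sub_eq_add_neg i 1).symm

lemma ncard_reversalsInto [Fact (2 < m)] (i : ZMod m) (j : Fin n) (i' : ZMod m) (j' : Fin n) :
    (reversalsInto m n i j i' j').ncard = pancakeQuotientEntry m n i j i' j' := by
  have : Fact (1 < m) := ⟨(Nat.lt_succ_self 1).trans Fact.out⟩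
  rw [pancakeQuotientEntry]
  split_ifs with hself hnbr
  · obtain ⟨rfl, rfl⟩ := hself
    rw [reversalsInto_self, Set.ncard_coe_finset, Finset.card_product, Nat.card_Icc,
      Finset.card_pair ZMod.neg_one_ne_one.symm]
    omega
  · obtain ⟨hi', hlen⟩ := hnbr
    rw [reversalsInto_of_sub_eq (sub_eq_one_or_sub_eq_neg_one_iff.mpr hi') (by omega),
      Set.ncard_singleton]
  · rw [reversalsInto_eq_empty hself hnbr, Set.ncard_empty]

lemma ncard_adj_inter_Vpart [Fact (2 < m)] {i : ZMod m} {j : Fin n} {x : ColouredPerm m n}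
    (hx : x ∈ Vpart m n i j) (i' : ZMod m) (j' : Fin n) :
    {y | (pancakeGraph m n).Adj x y ∧ y ∈ Vpart m n i' j'}.ncard =
      pancakeQuotientEntry m n i j i' j' := by
  have : Fact (1 < m) := ⟨(Nat.lt_succ_self 1).trans Fact.out⟩
  rw [ncard_adj_inter_eq, ← ncard_reversalsInto]
  congr 1
  ext ⟨k, ε⟩
  exact and_congr_right fun hk1 => and_congr_right fun hk => and_congr_right fun _ =>
    prefixRev_mem_Vpart_iff hx i' j' hk1 hk ε

lemma blockCirc_apply_eq_pancakeQuotientEntry [Nontrivial (ZMod m)] (i i' : ZMod m)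
    (j j' : Fin n) :
    blockCirc m n
        (fun c => if c = 0 then 2 • Dmat n else if c = 1 ∨ c = -1 then Emat n else 0)
        (i, j) (i', j') = pancakeQuotientEntry m n i j i' j' := by
  have hshift := sub_eq_one_or_sub_eq_neg_one_iff (a := i') (b := i)
  simp only [blockCirc, Matrix.of_apply, sub_eq_zero, hshift, pancakeQuotientEntry]
  by_cases hi : i' = i
  · subst hi
    have hnot : ¬(i' = i' + 1 ∨ i' = i' - 1) := by
      rw [← hshift, sub_self]
      simp
    simp only [hnot, false_and, if_false]
    by_cases hj : j' = j
    · subst hj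
      simp [Dmat]
    · simp [Dmat, hj, Ne.symm hj]
  · split_ifs <;> simp_all [Emat]

end

theorem pancake_partition_equitable_general (m n : ℕ) (hm : 3 ≤ m)
    (i : ZMod m) (j : Fin n) (x : ColouredPerm m n) (hx : x ∈ Vpart m n i j)
    (i' : ZMod m) (j' : Fin n) :
    {y | (pancakeGraph m n).Adj x y ∧ y ∈ Vpart m n i' j'}.ncard =
      (if i' = i ∧ j' = j then 2 * j.val
       else if (i' = i + 1 ∨ i' = i - 1) ∧ (j.val + 1) + (j'.val + 1) ≤ n + 1 then 1
       else 0) ∧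
    ({y | (pancakeGraph m n).Adj x y ∧ y ∈ Vpart m n i' j'}.ncard : ℝ) =
      blockCirc m n
        (fun c => if c = 0 then 2 • Dmat n else if c = 1 ∨ c = -1 then Emat n else 0)
        (i, j) (i', j') := by
  have : Fact (2 < m) := ⟨hm⟩
  have : Fact (1 < m) := ⟨by omega⟩
  have hcount := ncard_adj_inter_Vpart hx i' j'
  exact ⟨hcount, by rw [hcount, blockCirc_apply_eq_pancakeQuotientEntry]⟩

/-- For `m ≥ 3`, `n ≥ 1`, any vertex `x ∈ V_{i,j}` of
`𝒫_m(n)`, and any `(i', j')`: the number of neighbours of `x` in `V_{i',j'}`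
is `2(j−1)` if `(i',j') = (i,j)`, is `1` if `i' = i ± 1 (mod m)` and
`j + j' ≤ n + 1`, and is `0` otherwise (positions `j, j'` are 1-indexed in the
paper, so `j − 1` here is `j.val`).  In particular the partition `{V_{i,j}}` is
equitable with quotient matrix `circ(2Dₙ, Eₙ, O, …, O, Eₙ)`. -/
theorem pancake_partition_equitable (m n : ℕ) (hm : 3 ≤ m) (hn : 1 ≤ n)
    (i : ZMod m) (j : Fin n) (x : ColouredPerm m n) (hx : x ∈ Vpart m n i j)
    (i' : ZMod m) (j' : Fin n) :
    {y | (pancakeGraph m n).Adj x y ∧ y ∈ Vpart m n i' j'}.ncard =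
      (if i' = i ∧ j' = j then 2 * j.val
       else if (i' = i + 1 ∨ i' = i - 1) ∧ (j.val + 1) + (j'.val + 1) ≤ n + 1 then 1
       else 0) ∧
    ({y | (pancakeGraph m n).Adj x y ∧ y ∈ Vpart m n i' j'}.ncard : ℝ) =
      blockCirc m n
        (fun c => if c = 0 then 2 • Dmat n else if c = 1 ∨ c = -1 then Emat n else 0)
        (i, j) (i', j') :=
  pancake_partition_equitable_general m n hm i j x hx i' j'
end

section
/- Let n ≥ 2 be an integer and let t be a real number with t ≠ 0 and t < 2. Then the largest eigenvalue of the real symmetric n×n matrix 2D_n + t·E_n is strictly greater than 2n − 2. -/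
open Polynomial

/-! The largest eigenvalue of a real symmetric matrix `A` bounds the Rayleigh quotient of every
vector, and it exceeds every diagonal entry `A a a` whose row has a nonzero off-diagonal entry
`A a b`: for `ε = s * A a b` the vector `e_a + ε e_b` has Rayleigh quotient
`A a a + s (A a b)² (2 - s (A a a - A b b)) / (1 + ε²)`, which is larger than `A a a` once
`s > 0` is small. In `2Dₙ + tEₙ` the last diagonal entry is `2n - 2` and the entry in the last
row and first column is `t`. -/

open Matrix

open scoped MatrixOrder in
theorem Matrix.IsHermitian.dotProduct_mulVec_le {ι : Type*} [Fintype ι] [DecidableEq ι]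
    {A : Matrix ι ι ℝ} (hA : A.IsHermitian) {c : ℝ} (hc : ∀ μ ∈ spectrum ℝ A, μ ≤ c)
    (x : ι → ℝ) : x ⬝ᵥ (A *ᵥ x) ≤ c * (x ⬝ᵥ x) := by
  have hle : A ≤ algebraMap ℝ _ c := (le_algebraMap_iff_spectrum_le hA.isSelfAdjoint).mpr hc
  simpa [Algebra.algebraMap_eq_smul_one, sub_mulVec, dotProduct_sub, smul_mulVec] using
    (Matrix.le_iff.mp hle).dotProduct_mulVec_nonneg x

theorem le_nthLargestEig_one {V : Type*} [Fintype V] [DecidableEq V] {M : Matrix V V ℝ} {r : ℝ}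
    (hr : r ∈ M.charpoly.roots) : r ≤ nthLargestEig M 1 := by
  have hmem : r ∈ (M.charpoly.roots.sort (· ≤ ·)).reverse := by simpa using hr
  have hsorted : ((M.charpoly.roots.sort (· ≤ ·)).reverse).Pairwise (· ≥ ·) :=
    List.pairwise_reverse.mpr (Multiset.pairwise_sort _ _)
  unfold nthLargestEig
  generalize (M.charpoly.roots.sort (· ≤ ·)).reverse = l at hmem hsorted ⊢
  obtain _ | ⟨a, l⟩ := l
  · simp at hmem
  · rcases List.mem_cons.mp hmem with rfl | h
    · simp
    · simpa using (List.pairwise_cons.mp hsorted).1 r h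

theorem lt_nthLargestEig_one_of_lt_dotProduct_mulVec {V : Type*} [Fintype V] [DecidableEq V]
    {A : Matrix V V ℝ} (hA : A.IsHermitian) {c : ℝ} (x : V → ℝ)
    (hx : c * (x ⬝ᵥ x) < x ⬝ᵥ (A *ᵥ x)) : c < nthLargestEig A 1 := by
  by_contra! hc
  refine hx.not_ge (hA.dotProduct_mulVec_le (fun μ hμ => (le_nthLargestEig_one ?_).trans hc) x)
  exact (mem_roots A.charpoly_monic.ne_zero).mpr (mem_spectrum_iff_isRoot_charpoly.mp hμ)

section TwoCoordinates

variable {V : Type*} [Fintype V] [DecidableEq V] {a b : V}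

theorem dotProduct_self_single_add_smul_single (hab : a ≠ b) (ε : ℝ) :
    (Pi.single a 1 + ε • Pi.single b 1 : V → ℝ) ⬝ᵥ (Pi.single a 1 + ε • Pi.single b 1) =
      1 + ε ^ 2 := by
  simp only [dotProduct_add, dotProduct_smul, dotProduct_single, Pi.add_apply, Pi.smul_apply,
    Pi.single_eq_same, Pi.single_eq_of_ne hab, Pi.single_eq_of_ne hab.symm, smul_eq_mul]
  ring

theorem dotProduct_mulVec_single_add_smul_single (A : Matrix V V ℝ) (ε : ℝ) :
    (Pi.single a 1 + ε • Pi.single b 1 : V → ℝ) ⬝ᵥ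
        (A *ᵥ (Pi.single a 1 + ε • Pi.single b 1)) =
      A a a + ε * (A a b + A b a) + ε ^ 2 * A b b := by
  simp only [mulVec_add, mulVec_smul, mulVec_single_one, dotProduct_add, add_dotProduct,
    smul_dotProduct, dotProduct_smul, single_dotProduct, col_apply, smul_eq_mul, one_mul]
  ring

theorem diag_lt_nthLargestEig_one {A : Matrix V V ℝ} (hA : A.IsHermitian) (hab : a ≠ b)
    (h : A a b ≠ 0) : A a a < nthLargestEig A 1 := by
  set s := (|A a a - A b b| + 1)⁻¹
  have hs : 0 < s := by positivity
  have hsδ : s * (A a a - A b b) < 1 :=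
    calc s * (A a a - A b b) ≤ s * |A a a - A b b| := by gcongr; exact le_abs_self _
      _ < 1 := by rw [inv_mul_lt_iff₀ (by positivity)]; linarith
  have hba : A b a = A a b := by simpa using congrFun₂ hA a b
  apply lt_nthLargestEig_one_of_lt_dotProduct_mulVec hA
    (Pi.single a 1 + (s * A a b) • Pi.single b 1)
  rw [dotProduct_self_single_add_smul_single hab, dotProduct_mulVec_single_add_smul_single, hba]
  have hm : 0 < s * A a b ^ 2 := by positivity
  nlinarith [mul_lt_mul_of_pos_left hsδ hm]

end TwoCoordinates

theorem isHermitian_Dmat (n : ℕ) : (Dmat n).IsHermitian := isHermitian_diagonal _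

theorem isHermitian_Emat (n : ℕ) : (Emat n).IsHermitian := by
  ext i j
  simp [Emat, add_comm]

theorem largest_eig_two_D_add_smul_E_general (n : ℕ) (hn : 2 ≤ n) (t : ℝ)
    (ht0 : t ≠ 0) :
    nthLargestEig ((2 : ℝ) • Dmat n + t • Emat n) 1 > 2 * n - 2 := by
  let last : Fin n := ⟨n - 1, by omega⟩
  let first : Fin n := ⟨0, by omega⟩
  have hne : last ≠ first := Fin.ne_of_val_ne (by simp only [last, first]; omega)
  have hdiag : ((2 : ℝ) • Dmat n + t • Emat n) last last = 2 * n - 2 := by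
    simp only [Dmat, Emat, Matrix.add_apply, Matrix.smul_apply, diagonal_apply_eq, of_apply,
      smul_eq_mul, last, show ¬ n - 1 + 1 + (n - 1 + 1) ≤ n + 1 by omega, if_false,
      Nat.cast_sub (by omega : 1 ≤ n), Nat.cast_one]
    ring
  have hoff : ((2 : ℝ) • Dmat n + t • Emat n) last first = t := by
    simp [last, first, Dmat, Emat, hne, show n - 1 + 1 + 1 ≤ n + 1 by omega]
  have hM : ((2 : ℝ) • Dmat n + t • Emat n).IsHermitian :=
    ((isHermitian_Dmat n).smul (.all 2)).add ((isHermitian_Emat n).smul (.all t))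
  rw [gt_iff_lt, ← hdiag]
  exact diag_lt_nthLargestEig_one hM hne (hoff.symm ▸ ht0)

/-- For `n ≥ 2` and a real number `t ≠ 0` with `t < 2`, the
largest eigenvalue of the real symmetric matrix `2Dₙ + t·Eₙ` is strictly
greater than `2n − 2`. -/
theorem largest_eig_two_D_add_smul_E (n : ℕ) (hn : 2 ≤ n) (t : ℝ)
    (ht0 : t ≠ 0) (ht2 : t < 2) :
    nthLargestEig ((2 : ℝ) • Dmat n + t • Emat n) 1 > 2 * n - 2 :=
  largest_eig_two_D_add_smul_E_general n hn t ht0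
end

section
/- Let n ≥ 2 be an integer. Then the largest eigenvalue of the real symmetric n×n matrix D_n − E_n is strictly greater than n − 1. -/
open Polynomial

/-!
The largest eigenvalue of a real symmetric matrix dominates its Rayleigh quotient. For
`v = -e₁ + n eₙ` only the corner entries `-1, -1, -1, n - 1` of `Dₙ − Eₙ` contribute, and
`vᵀ (Dₙ − Eₙ) v = (n - 1) ‖v‖² + n`.
-/

open Matrix

namespace Matrix

section Spectrum

open scoped ComplexOrder

variable {n 𝕜 : Type*} [Fintype n] [DecidableEq n] [RCLike 𝕜]

lemma IsHermitian.posSemidef_algebraMap_sub {A : Matrix n n 𝕜} (hA : A.IsHermitian)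
    {c : ℝ} (hc : ∀ i, hA.eigenvalues i ≤ c) :
    (algebraMap 𝕜 (Matrix n n 𝕜) c - A).PosSemidef := by
  rw [hA.spectral_theorem,
    ← AlgHomClass.commutes (Unitary.conjStarAlgAut 𝕜 _ hA.eigenvectorUnitary), ← map_sub,
    Unitary.conjStarAlgAut_apply, Unitary.isUnit_coe.posSemidef_star_right_conjugate_iff,
    algebraMap_eq_diagonal, diagonal_sub, posSemidef_diagonal_iff]
  intro i
  simpa using hc i

lemma IsHermitian.exists_lt_eigenvalues_of_lt_re_dotProduct {A : Matrix n n 𝕜}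
    (hA : A.IsHermitian) {c : ℝ} {v : n → 𝕜}
    (hv : c * RCLike.re (star v ⬝ᵥ v) < RCLike.re (star v ⬝ᵥ A *ᵥ v)) :
    ∃ i, c < hA.eigenvalues i := by
  by_contra! hc
  have := (hA.posSemidef_algebraMap_sub hc).re_dotProduct_nonneg v
  rw [Algebra.algebraMap_eq_smul_one, sub_mulVec, dotProduct_sub, map_sub, smul_mulVec,
    one_mulVec, dotProduct_smul, smul_eq_mul, RCLike.re_ofReal_mul] at this
  linarith

end Spectrum

lemma dotProduct_mulVec_single_add_single {n R : Type*} [Fintype n] [DecidableEq n]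
    [CommSemiring R] (M : Matrix n n R) (i j : n) (a b : R) :
    (Pi.single i a + Pi.single j b) ⬝ᵥ M *ᵥ (Pi.single i a + Pi.single j b) =
      a * a * M i i + a * b * (M i j + M j i) + b * b * M j j := by
  simp only [mulVec_add, mulVec_single, add_dotProduct, single_dotProduct, Pi.add_apply,
    Pi.smul_apply, col_apply, op_smul_eq_mul]
  ring

end Matrix

lemma List.le_getD_reverse_zero {α : Type*} [Preorder α] {l : List α}
    (hl : l.Pairwise (· ≤ ·)) {x : α} (hx : x ∈ l) (d : α) : x ≤ l.reverse.getD 0 d := by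
  have hrev : l.reverse.Pairwise (· ≥ ·) := List.pairwise_reverse.mpr hl
  rw [← List.mem_reverse] at hx
  cases h : l.reverse with
  | nil => simp_all
  | cons b t =>
    rw [h] at hx hrev
    rcases List.mem_cons.mp hx with rfl | hx
    · exact le_rfl
    · exact List.rel_of_pairwise_cons hrev hx

lemma le_nthLargestEig_one_of_mem_roots {V : Type*} [Fintype V] [DecidableEq V]
    {M : Matrix V V ℝ} {x : ℝ} (hx : x ∈ M.charpoly.roots) : x ≤ nthLargestEig M 1 :=
  List.le_getD_reverse_zero (Multiset.pairwise_sort _ _) ((Multiset.mem_sort _).mpr hx) 0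

lemma Matrix.IsHermitian.eigenvalues_le_nthLargestEig_one {V : Type*} [Fintype V]
    [DecidableEq V] {M : Matrix V V ℝ} (hM : M.IsHermitian) (i : V) :
    hM.eigenvalues i ≤ nthLargestEig M 1 :=
  le_nthLargestEig_one_of_mem_roots (by simp [hM.roots_charpoly_eq_eigenvalues])

lemma isHermitian_Dmat_sub_Emat (n : ℕ) : (Dmat n - Emat n).IsHermitian := by
  refine (isHermitian_diagonal _).sub (Matrix.IsHermitian.ext fun i j => ?_)
  simp only [Emat, Matrix.of_apply, star_trivial, add_comm]

lemma exists_sub_one_mul_dotProduct_lt_Dmat_sub_Emat {n : ℕ} (hn : 2 ≤ n) :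
    ∃ v : Fin n → ℝ, (n - 1 : ℝ) * (v ⬝ᵥ v) < v ⬝ᵥ (Dmat n - Emat n) *ᵥ v := by
  set first : Fin n := ⟨0, by omega⟩
  set last : Fin n := ⟨n - 1, by omega⟩
  have hne : first ≠ last := Fin.ne_of_val_ne (by simp only [first, last]; omega)
  set M := Dmat n - Emat n
  have h00 : M first first = -1 := by
    simp only [M, Dmat, Emat, Matrix.sub_apply, diagonal_apply_eq, of_apply, first]
    rw [if_pos (by omega)]
    simp
  have h01 : M first last = -1 := by
    simp only [M, Dmat, Emat, Matrix.sub_apply, diagonal_apply_ne _ hne, of_apply, first, last]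
    rw [if_pos (by omega), zero_sub]
  have h10 : M last first = -1 := by
    simp only [M, Dmat, Emat, Matrix.sub_apply, diagonal_apply_ne _ hne.symm, of_apply, first,
      last]
    rw [if_pos (by omega), zero_sub]
  have h11 : M last last = n - 1 := by
    simp only [M, Dmat, Emat, Matrix.sub_apply, diagonal_apply_eq, of_apply, last]
    rw [if_neg (by omega), Nat.cast_sub (by omega), Nat.cast_one, sub_zero]
  refine ⟨Pi.single first (-1) + Pi.single last n, ?_⟩
  have hvv := dotProduct_mulVec_single_add_single (1 : Matrix (Fin n) (Fin n) ℝ) first last (-1) n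
  rw [one_mulVec] at hvv
  rw [hvv, dotProduct_mulVec_single_add_single, h00, h01, h10, h11]
  simp only [one_apply_eq, one_apply_ne hne, one_apply_ne hne.symm]
  have hn0 : (0 : ℝ) < n := by positivity
  linear_combination hn0

/-- For `n ≥ 2`, the largest eigenvalue of the real symmetric
matrix `Dₙ − Eₙ` is strictly greater than `n − 1`. -/
theorem largest_eig_D_sub_E (n : ℕ) (hn : 2 ≤ n) :
    nthLargestEig (Dmat n - Emat n) 1 > n - 1 := by
  have hM := isHermitian_Dmat_sub_Emat n
  obtain ⟨v, hv⟩ := exists_sub_one_mul_dotProduct_lt_Dmat_sub_Emat hn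
  obtain ⟨i, hi⟩ := hM.exists_lt_eigenvalues_of_lt_re_dotProduct (v := v) (by simpa using hv)
  exact hi.trans_le (hM.eigenvalues_le_nthLargestEig_one i)
end

section
/- For every integer n ≥ 2, the second largest eigenvalue of the adjacency matrix of the burnt pancake graph P_2(n) satisfies λ_2(P_2(n)) > n − 1. -/
/-!
The neighbours of `σ` in the burnt pancake graph are exactly its `n` prefix reversals, so the
graph is `n`-regular and the constant vector has eigenvalue `n`. Recording only the position `j`
and the colour `i` of the letter `1` gives the equitable partition `{V_{i,j}}` with quotient
matrix `circ(D_n, E_n)`, so every eigenvector `u` of `D_n - E_n` lifts to the eigenvector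
`(-1)^i u_j` of the graph, with the same eigenvalue. The Rayleigh quotient of `n e_n - e_1` shows
that `D_n - E_n` has an eigenvalue above `n - 1`, and a maximum-modulus argument on the rows of
its eigenvalue equation shows that it has none at or above `n`. Hence `n` and this eigenvalue
are two distinct eigenvalues of the graph above `n - 1`.
-/

open Polynomial

open Finset Matrix

section Spectrum
variable {ι K : Type*} [Fintype ι] [DecidableEq ι]

lemma Matrix.isRoot_charpoly_iff_exists_mulVec_eq_smul [Field K] (M : Matrix ι ι K) (μ : K) :
    M.charpoly.IsRoot μ ↔ ∃ v ≠ 0, M *ᵥ v = μ • v := by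
  rw [IsRoot, eval_charpoly, ← exists_mulVec_eq_zero_iff]
  refine exists_congr fun v => and_congr_right fun _ => ?_
  have hscalar : scalar ι μ *ᵥ v = μ • v := by ext; simp [mulVec_diagonal]
  rw [sub_mulVec, sub_eq_zero, eq_comm, hscalar]

lemma Matrix.mem_roots_charpoly_of_mulVec_eq_smul [Field K] {M : Matrix ι ι K} {μ : K}
    {v : ι → K} (hv : v ≠ 0) (h : M *ᵥ v = μ • v) : μ ∈ M.charpoly.roots :=
  (mem_roots (charpoly_monic M).ne_zero).mpr
    ((isRoot_charpoly_iff_exists_mulVec_eq_smul M μ).mpr ⟨v, hv, h⟩)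

lemma Matrix.IsHermitian.exists_mem_spectrum_gt {M : Matrix ι ι ℝ} (hM : M.IsHermitian)
    {c : ℝ} {v : ι → ℝ} (h : c * (v ⬝ᵥ v) < v ⬝ᵥ (M *ᵥ v)) :
    ∃ μ ∈ spectrum ℝ M, c < μ := by
  by_contra! hle
  have hpsd : (algebraMap ℝ _ c - M).PosSemidef := by
    refine posSemidef_iff_isHermitian_and_spectrum_nonneg.mpr ⟨?_, ?_⟩
    · rw [algebraMap_eq_diagonal]
      exact (isHermitian_diagonal _).sub hM
    · rw [← spectrum.singleton_sub_eq]
      rintro _ ⟨_, rfl, μ, hμ, rfl⟩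
      exact sub_nonneg.mpr (hle μ hμ)
  have := hpsd.dotProduct_mulVec_nonneg v
  rw [Algebra.algebraMap_eq_smul_one, sub_mulVec, smul_mulVec, one_mulVec, dotProduct_sub,
    dotProduct_smul, smul_eq_mul, star_trivial] at this
  linarith

end Spectrum

lemma Multiset.lt_getD_one_reverse_sort {s : Multiset ℝ} {a b c : ℝ} (ha : a ∈ s)
    (hb : b ∈ s) (hab : a ≠ b) (hca : c < a) (hcb : c < b) :
    c < ((s.sort (· ≤ ·)).reverse).getD 1 0 := by
  set l := (s.sort (· ≤ ·)).reverse
  have hl : l.Pairwise (· ≥ ·) := List.pairwise_reverse.mpr (s.pairwise_sort _)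
  obtain ⟨p, hp, rfl⟩ := List.getElem_of_mem (show a ∈ l by simpa [l] using ha)
  obtain ⟨q, hq, rfl⟩ := List.getElem_of_mem (show b ∈ l by simpa [l] using hb)
  -- `a` and `b` cannot both sit at index `0`.
  obtain ⟨r, hr, hr₁, hcr⟩ : ∃ r, ∃ hr : r < l.length, 1 ≤ r ∧ c < l[r] := by
    rcases Nat.eq_zero_or_pos p with rfl | hp₁
    · exact ⟨q, hq, Nat.one_le_iff_ne_zero.mpr fun hq₀ => hab (by simp [hq₀]), hcb⟩
    · exact ⟨p, hp, hp₁, hca⟩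
  rw [List.getD_eq_getElem _ _ (by omega)]
  rcases hr₁.eq_or_lt with rfl | hr₁
  · exact hcr
  · exact hcr.trans_le (List.pairwise_iff_getElem.mp hl 1 r (by omega) hr hr₁)

section PrefixReversal

variable {m n k : ℕ}

lemma flipPerm_apply_of_lt (hk : k ≤ n) {t : Fin n} (ht : (t : ℕ) < k) :
    (flipPerm n k t : ℕ) = k - 1 - t := by
  simp [flipPerm, flipFun, ht, hk]

lemma flipPerm_apply_of_le {t : Fin n} (ht : k ≤ t) : flipPerm n k t = t := by
  simp [flipPerm, flipFun, Nat.not_lt.mpr ht]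

@[simp]
lemma flipPerm_flipPerm (t : Fin n) : flipPerm n k (flipPerm n k t) = t :=
  flipFun_involutive n k t

@[simp]
lemma flipPerm_symm : (flipPerm n k).symm = flipPerm n k :=
  Function.Involutive.toPerm_symm _

lemma flipPerm_lt_iff (hk : k ≤ n) {t : Fin n} :
    (flipPerm n k t : ℕ) < k ↔ (t : ℕ) < k := by
  by_cases ht : (t : ℕ) < k
  · simp only [ht, iff_true, flipPerm_apply_of_lt hk ht]; omega
  · rw [flipPerm_apply_of_le (Nat.not_lt.mp ht)]

lemma prefixRev_prefixRev_neg (hk : k ≤ n) (ε : ZMod m) (σ : ColouredPerm m n) :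
    prefixRev m n k (-ε) (prefixRev m n k ε σ) = σ := by
  ext t
  · by_cases ht : (t : ℕ) < k
    · simp [prefixRev, ht, (flipPerm_lt_iff hk).mpr ht]
    · simp [prefixRev, ht]
  · simp [prefixRev, mul_assoc]

lemma prefixRev_ne_self {ε : ZMod m} (hε : ε ≠ 0) (hk : 1 ≤ k) (hkn : k ≤ n)
    (σ : ColouredPerm m n) : prefixRev m n k ε σ ≠ σ := by
  intro h
  have hflip : flipPerm n k = 1 := mul_eq_left.mp (congrArg Prod.snd h)
  have h0 := congrFun (congrArg Prod.fst h) ⟨0, by omega⟩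
  simp [prefixRev, hflip, show 0 < k by omega, hε] at h0

lemma flipPerm_zero (hk : 1 ≤ k) (hkn : k ≤ n) :
    (flipPerm n k ⟨0, by omega⟩ : ℕ) = k - 1 := by
  rw [flipPerm_apply_of_lt hkn (by simp; omega)]; rfl

lemma eq_of_prefixRev_eq {k' : ℕ} {ε ε' : ZMod m} (hk : 1 ≤ k) (hkn : k ≤ n)
    (hk' : 1 ≤ k') (hkn' : k' ≤ n) {σ : ColouredPerm m n}
    (h : prefixRev m n k ε σ = prefixRev m n k' ε' σ) : k = k' := by
  have hflip : flipPerm n k = flipPerm n k' := mul_left_cancel (congrArg Prod.snd h)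
  have := congrArg (fun e : Equiv.Perm (Fin n) => (e ⟨0, by omega⟩ : ℕ)) hflip
  simp only [flipPerm_zero hk hkn, flipPerm_zero hk' hkn'] at this
  omega

lemma prefixRev_snd_symm_apply (ε : ZMod m) (σ : ColouredPerm m n) (a : Fin n) :
    (prefixRev m n k ε σ).2.symm a = flipPerm n k (σ.2.symm a) := by
  simp [prefixRev, Equiv.Perm.mul_def]

lemma prefixRev_fst_flipPerm (hk : k ≤ n) (ε : ZMod m) (σ : ColouredPerm m n) (t : Fin n) :
    (prefixRev m n k ε σ).1 (flipPerm n k t) = if (t : ℕ) < k then σ.1 t + ε else σ.1 t := by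
  by_cases ht : (t : ℕ) < k
  · simp [prefixRev, ht, (flipPerm_lt_iff hk).mpr ht]
  · simp [prefixRev, ht, flipPerm_apply_of_le (Nat.not_lt.mp ht)]

end PrefixReversal

section BurntPancakeGraph
variable {n : ℕ}

lemma pancakeAdj_two_iff {σ τ : ColouredPerm 2 n} :
    pancakeAdj 2 n σ τ ↔ ∃ k ∈ Icc 1 n, τ = prefixRev 2 n k 1 σ := by
  have hneg : (-1 : ZMod 2) = 1 := rfl
  constructor
  · rintro ⟨-, k, hk, hkn, ε, hε, h⟩
    obtain rfl : ε = 1 := hε.elim id (·.trans hneg)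
    refine ⟨k, mem_Icc.mpr ⟨hk, hkn⟩, h.elim id fun h => ?_⟩
    have hinv := prefixRev_prefixRev_neg hkn 1 τ
    rw [hneg] at hinv
    rw [h, hinv]
  · rintro ⟨k, hk, rfl⟩
    obtain ⟨hk, hkn⟩ := mem_Icc.mp hk
    exact ⟨(prefixRev_ne_self one_ne_zero hk hkn σ).symm, k, hk, hkn, 1, .inl rfl, .inl rfl⟩

lemma pancakeAdjMatrix_two_mulVec_apply (f : ColouredPerm 2 n → ℝ) (σ : ColouredPerm 2 n) :
    (pancakeAdjMatrix 2 n *ᵥ f) σ = ∑ k ∈ Icc 1 n, f (prefixRev 2 n k 1 σ) := by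
  classical
  have hnbr : univ.filter (pancakeAdj 2 n σ) = (Icc 1 n).image (prefixRev 2 n · 1 σ) := by
    ext τ
    simp [pancakeAdj_two_iff, eq_comm]
  rw [← sum_image fun k hk k' hk' h => eq_of_prefixRev_eq (mem_Icc.mp hk).1 (mem_Icc.mp hk).2
    (mem_Icc.mp hk').1 (mem_Icc.mp hk').2 h, ← hnbr, sum_filter]
  simp [Matrix.mulVec, dotProduct, pancakeAdjMatrix]

lemma pancakeAdjMatrix_two_mulVec_one :
    pancakeAdjMatrix 2 n *ᵥ 1 = (n : ℝ) • 1 := by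
  ext σ
  simp [pancakeAdjMatrix_two_mulVec_apply]

end BurntPancakeGraph


section QuotientMatrix
variable {n : ℕ}

lemma Emat_apply (j t : Fin n) : Emat n j t = if (t : ℕ) < n - j then 1 else 0 := by
  simp only [Emat, of_apply]
  congr 1
  exact propext (by omega)

lemma card_filter_lt_sub (j : Fin n) : #{t : Fin n | (t : ℕ) < n - j} = n - j := by
  rw [Fin.card_filter_val_lt]; omega

lemma Dmat_sub_Emat_mulVec_apply (u : Fin n → ℝ) (j : Fin n) :
    ((Dmat n - Emat n) *ᵥ u) j =
      j * u j - ∑ t ∈ univ.filter (fun t : Fin n => ↑t < n - j), u t := by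
  rw [sub_mulVec, Pi.sub_apply, Dmat, mulVec_diagonal]
  simp [mulVec, dotProduct, Emat_apply, sum_filter]

lemma Dmat_sub_Emat_isHermitian : (Dmat n - Emat n).IsHermitian := by
  refine (isHermitian_diagonal _).sub (IsHermitian.ext fun i j => ?_)
  simp only [Emat, of_apply, star_trivial]
  congr 1
  exact propext (by omega)

lemma Dmat_sub_Emat_eigenvector_eq_neg {μ : ℝ} (hμ : n ≤ μ) {u : Fin n → ℝ}
    (hu : (Dmat n - Emat n) *ᵥ u = μ • u) {j : Fin n} (hmax : ∀ t, |u t| ≤ u j)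
    (t : Fin n) (ht : (t : ℕ) < n - j) : u t = -u j := by
  have hrow := congrFun hu j
  rw [Dmat_sub_Emat_mulVec_apply, Pi.smul_apply, smul_eq_mul] at hrow
  have hterm : ∀ s ∈ univ.filter (fun s : Fin n => ↑s < n - j), 0 ≤ u s + u j :=
    fun s _ => by linarith [neg_abs_le (u s), hmax s]
  have hsum :
      ∑ s ∈ univ.filter (fun s : Fin n => ↑s < n - j), (u s + u j) = (n - μ) * u j := by
    rw [sum_add_distrib, sum_const, card_filter_lt_sub, nsmul_eq_mul,
      Nat.cast_sub j.is_lt.le]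
    linarith
  have hzero : ∑ s ∈ univ.filter (fun s : Fin n => ↑s < n - j), (u s + u j) = 0 :=
    le_antisymm (hsum ▸ mul_nonpos_of_nonpos_of_nonneg (by linarith)
      ((abs_nonneg _).trans (hmax j))) (sum_nonneg hterm)
  linarith [(sum_eq_zero_iff_of_nonneg hterm).mp hzero t (by simpa using ht)]

lemma Dmat_sub_Emat_eigenvalue_lt {μ : ℝ} {u : Fin n → ℝ} (hu₀ : u ≠ 0)
    (hu : (Dmat n - Emat n) *ᵥ u = μ • u) : μ < n := by
  by_contra! hμ
  obtain ⟨t₀, -⟩ := Function.ne_iff.mp hu₀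
  let z : Fin n := ⟨0, t₀.pos⟩
  obtain ⟨j, -, hj⟩ := exists_max_image univ (fun t => |u t|) ⟨t₀, mem_univ _⟩
  -- Row `j` forces `w 0 = -w j`; then `-w` is maximal at `0`, and row `0` forces `w 0 = 0`.
  have hvanish : ∀ w : Fin n → ℝ, (Dmat n - Emat n) *ᵥ w = μ • w →
      (∀ t, |w t| ≤ w j) → w = 0 := by
    intro w hw hmax
    have h0 := Dmat_sub_Emat_eigenvector_eq_neg hμ hw hmax z (by show 0 < n - (j : ℕ); omega)
    have hw' : (Dmat n - Emat n) *ᵥ (-w) = μ • (-w) := by rw [mulVec_neg, hw, smul_neg]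
    have h1 := Dmat_sub_Emat_eigenvector_eq_neg hμ hw' (j := z)
      (fun t => by simpa [h0] using hmax t) z (by show 0 < n - 0; exact t₀.pos)
    have hz : w z = 0 := by
      simp only [Pi.neg_apply, neg_neg] at h1
      linarith
    ext t
    exact abs_nonpos_iff.mp (by linarith [hmax t])
  rcases le_total 0 (u j) with hj0 | hj0
  · exact hu₀ (hvanish u hu fun t => (hj t (mem_univ t)).trans (abs_of_nonneg hj0).le)
  · refine hu₀ (neg_eq_zero.mp (hvanish (-u) (by rw [mulVec_neg, hu, smul_neg]) fun t => ?_))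
    simpa [abs_of_nonpos hj0] using hj t (mem_univ t)

lemma exists_mem_spectrum_Dmat_sub_Emat_gt (hn : 2 ≤ n) :
    ∃ μ ∈ spectrum ℝ (Dmat n - Emat n), n - 1 < μ := by
  obtain ⟨N, rfl⟩ : ∃ N, n = N + 2 := ⟨n - 2, by omega⟩
  -- The Rayleigh quotient of `n e_{n-1} - e_0` is `n - 1 + n / (n ^ 2 + 1)`.
  refine Dmat_sub_Emat_isHermitian.exists_mem_spectrum_gt
    (v := Pi.single (Fin.last _) ((N + 2 : ℕ) : ℝ) - Pi.single 0 1) ?_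
  simp [mulVec_sub, sub_dotProduct, dotProduct_sub, mulVec_single, Dmat, Emat_apply, Fin.last]
  nlinarith

end QuotientMatrix

section Lift
variable {n : ℕ}

lemma sum_Ioc_flipPerm {M : Type*} [AddCommMonoid M] (g : Fin n → M) (j : Fin n) :
    ∑ k ∈ Ioc (j : ℕ) n, g (flipPerm n k j) =
      ∑ t ∈ univ.filter (fun t : Fin n => ↑t < n - j), g t := by
  have hflip : ∀ k ∈ Ioc (j : ℕ) n, (flipPerm n k j : ℕ) = k - 1 - j := fun k hk =>
    flipPerm_apply_of_lt (mem_Ioc.mp hk).2 (mem_Ioc.mp hk).1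
  refine sum_nbij' (flipPerm n · j) (fun t => j + t + 1) (fun k hk => ?_) (fun t ht => ?_)
    (fun k hk => ?_) (fun t ht => ?_) fun _ _ => rfl
  · have := mem_Ioc.mp hk
    simp only [mem_filter, mem_univ, true_and, hflip k hk]
    omega
  · have := (mem_filter.mp ht).2
    simp only [mem_Ioc]
    omega
  · have := mem_Ioc.mp hk
    simp only [hflip k hk]
    omega
  · have := (mem_filter.mp ht).2
    ext
    rw [flipPerm_apply_of_lt (by omega) (by omega)]
    omega

def colourSign (c : ZMod 2) : ℝ := (-1) ^ c.val

lemma colourSign_add_one (c : ZMod 2) : colourSign (c + 1) = -colourSign c := by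
  fin_cases c
  · show (-1 : ℝ) ^ 1 = -(-1) ^ 0
    norm_num
  · show (-1 : ℝ) ^ 0 = -(-1) ^ 1
    norm_num

variable [NeZero n]

/-- The lift of `u` along the partition `Vpart 2 n`: it equals `(-1) ^ i * u j` on
`Vpart 2 n i j`. -/
def burntLift (u : Fin n → ℝ) (σ : ColouredPerm 2 n) : ℝ :=
  colourSign (σ.1 (σ.2.symm 0)) * u (σ.2.symm 0)

lemma burntLift_prefixRev {k : ℕ} (hk : k ≤ n) (u : Fin n → ℝ) (σ : ColouredPerm 2 n) :
    burntLift u (prefixRev 2 n k 1 σ) =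
      if ((σ.2.symm 0 : Fin n) : ℕ) < k then
        -colourSign (σ.1 (σ.2.symm 0)) * u (flipPerm n k (σ.2.symm 0))
      else burntLift u σ := by
  rw [burntLift, prefixRev_snd_symm_apply, prefixRev_fst_flipPerm hk]
  split_ifs with h
  · rw [colourSign_add_one]
  · rw [flipPerm_apply_of_le (Nat.not_lt.mp h), burntLift]

lemma burntLift_ne_zero {u : Fin n → ℝ} (hu : u ≠ 0) : burntLift u ≠ 0 := by
  obtain ⟨t, ht⟩ := Function.ne_iff.mp hu
  refine Function.ne_iff.mpr ⟨(0, Equiv.swap t 0), ?_⟩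
  simpa [burntLift, colourSign] using ht

lemma pancakeAdjMatrix_two_mulVec_burntLift {μ : ℝ} {u : Fin n → ℝ}
    (hu : (Dmat n - Emat n) *ᵥ u = μ • u) :
    pancakeAdjMatrix 2 n *ᵥ burntLift u = μ • burntLift u := by
  ext σ
  set j : Fin n := σ.2.symm 0
  set s := colourSign (σ.1 j)
  -- The reversals of length `k ≤ j` fix the letter `0`; the longer ones carry it to the
  -- positions `t < n - j` and flip its colour.
  have hsplit : ∑ k ∈ Icc 1 n, burntLift u (prefixRev 2 n k 1 σ) =
      ∑ k ∈ Ioc 0 (j : ℕ), burntLift u σ +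
        ∑ k ∈ Ioc (j : ℕ) n, -s * u (flipPerm n k j) := by
    rw [show Icc 1 n = Ioc 0 n from Icc_add_one_left_eq_Ioc 0 n,
      ← sum_Ioc_consecutive _ (Nat.zero_le _) j.is_lt.le]
    congr 1 <;> refine sum_congr rfl fun k hk => ?_ <;> obtain ⟨hk₁, hk₂⟩ := mem_Ioc.mp hk
    · rw [burntLift_prefixRev (by omega), if_neg (by omega)]
    · rw [burntLift_prefixRev hk₂, if_pos hk₁]
  have hrow := congrFun hu j
  rw [Dmat_sub_Emat_mulVec_apply, Pi.smul_apply, smul_eq_mul] at hrow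
  rw [pancakeAdjMatrix_two_mulVec_apply, hsplit, sum_Ioc_flipPerm (-s * u ·), sum_const,
    Nat.card_Ioc, ← mul_sum, Pi.smul_apply, smul_eq_mul, burntLift, nsmul_eq_mul, Nat.sub_zero]
  linear_combination s * hrow

end Lift

/-- For every integer `n ≥ 2`, the second largest eigenvalue
of the adjacency matrix of the burnt pancake graph `𝒫_2(n)` satisfies
`λ₂(𝒫_2(n)) > n − 1`. -/
theorem burnt_pancake_second_eig_gt (n : ℕ) (hn : 2 ≤ n) :
    nthLargestEig (pancakeAdjMatrix 2 n) 2 > n - 1 := by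
  have : NeZero n := ⟨by omega⟩
  obtain ⟨μ, hμ, hμn⟩ := exists_mem_spectrum_Dmat_sub_Emat_gt hn
  obtain ⟨u, hu₀, hu⟩ := ((Dmat n - Emat n).isRoot_charpoly_iff_exists_mulVec_eq_smul μ).mp
    (mem_spectrum_iff_isRoot_charpoly.mp hμ)
  exact Multiset.lt_getD_one_reverse_sort
    (mem_roots_charpoly_of_mulVec_eq_smul one_ne_zero pancakeAdjMatrix_two_mulVec_one)
    (mem_roots_charpoly_of_mulVec_eq_smul (burntLift_ne_zero hu₀)
      (pancakeAdjMatrix_two_mulVec_burntLift hu))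
    (Dmat_sub_Emat_eigenvalue_lt hu₀ hu).ne' (by linarith) hμn
end

section
/- For every integer n ≥ 1, the spectrum of the real symmetric n×n matrix 2D_n + 2E_n is exactly the set {0, 2, 4, …, 2n} \ {2⌊n/2⌋}, with each of these n numbers occurring as an eigenvalue of multiplicity 1. -/
open Polynomial

/-!
Since `2Dₙ + 2Eₙ = 2(Dₙ + Eₙ)` and row `j` of `(Dₙ + Eₙ) v` is `j vⱼ + ∑_{i < n - j} vᵢ`, it is
convenient to write `vᵢ = S(i+1) - S(i)` with `S(0) = 0`: then `v` is an eigenvector for `k`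
exactly when `(j - k)(S(j+1) - S(j)) + S(n - j) = 0` for all `j < n`. For every `k ≤ n` the tent
`S(m) = (n - k - m)⁺` for `m > k`, `S(m) = (m + k - n)⁺` for `m ≤ k` solves this, and it is
non-constant unless `n ∈ {2k, 2k + 1}`. This yields `n` distinct eigenvalues `2k`,
`k ∈ {0, …, n} \ {⌊n/2⌋}`, which exhausts the degree of the characteristic polynomial.
-/

open Finset Matrix

theorem Polynomial.roots_eq_of_nodup_of_natDegree_le {R : Type*} [CommRing R] [IsDomain R]
    {p : R[X]} {s : Multiset R} (hp : p ≠ 0) (hs : s.Nodup)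
    (hdeg : p.natDegree ≤ Multiset.card s) (hroot : ∀ x ∈ s, p.IsRoot x) : p.roots = s :=
  (Multiset.eq_of_le_of_card_le
    ((Multiset.le_iff_subset hs).2 fun x hx => (mem_roots hp).2 (hroot x hx))
    ((card_roots' p).trans hdeg)).symm

theorem Matrix.isRoot_charpoly_of_mulVec_eq_smul {ι K : Type*} [Fintype ι] [DecidableEq ι]
    [Field K] {A : Matrix ι ι K} {μ : K} {v : ι → K} (hv : v ≠ 0) (hAv : A *ᵥ v = μ • v) :
    A.charpoly.IsRoot μ := by
  rw [← charpoly_toLin', ← Module.End.hasEigenvalue_iff_isRoot_charpoly]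
  exact Module.End.hasEigenvalue_of_hasEigenvector
    ⟨Module.End.mem_eigenspace_iff.2 (by rw [toLin'_apply, hAv]), hv⟩

theorem Emat_mulVec_apply (n : ℕ) (V : ℕ → ℝ) (j : Fin n) :
    (Emat n *ᵥ fun i => V i) j = ∑ i ∈ range (n - j), V i := by
  have hentry : ∀ i : Fin n, Emat n j i * V i = if (i : ℕ) ∈ range (n - j) then V i else 0 := by
    intro i
    simp only [Emat, of_apply, mem_range, ite_mul, one_mul, zero_mul]
    exact if_congr (by omega) rfl rfl
  rw [mulVec, dotProduct, Finset.sum_congr rfl fun i _ => hentry i,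
    Fin.sum_univ_eq_sum_range (fun i => if i ∈ range (n - j) then V i else 0), sum_ite_mem,
    inter_eq_right.2 (range_subset_range.2 (Nat.sub_le n j))]

theorem Dmat_add_Emat_mulVec_sub_eq_smul (n k : ℕ) (S : ℕ → ℝ) (hS0 : S 0 = 0)
    (hS : ∀ j < n, ((j : ℝ) - k) * (S (j + 1) - S j) + S (n - j) = 0) :
    (Dmat n + Emat n) *ᵥ (fun i : Fin n => S (i + 1) - S i) =
      (k : ℝ) • fun i : Fin n => S (i + 1) - S i := by
  ext j
  have hE := Emat_mulVec_apply n (fun i => S (i + 1) - S i) j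
  rw [sum_range_sub, hS0, sub_zero] at hE
  rw [add_mulVec, Pi.add_apply, hE, Dmat, mulVec_diagonal, Pi.smul_apply, smul_eq_mul]
  linear_combination hS j j.isLt

-- The tent `S` above; truncated subtraction supplies the positive parts.
def eigenPrefixSum (n k m : ℕ) : ℕ := if k < m then n - k - m else m + k - n

theorem eigenPrefixSum_spec {n k j : ℕ} (hj : j < n) :
    ((j : ℝ) - k) * ((eigenPrefixSum n k (j + 1) : ℝ) - eigenPrefixSum n k j) +
      eigenPrefixSum n k (n - j) = 0 := by
  set S := eigenPrefixSum n k with hS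
  have key : (j = k ∧ S (n - j) = 0) ∨ (S (j + 1) = S j ∧ S (n - j) = 0) ∨
      (S (j + 1) = S j + 1 ∧ S (n - j) + j = k) ∨ (S (j + 1) + 1 = S j ∧ S (n - j) + k = j) := by
    simp only [hS, eigenPrefixSum]
    split_ifs <;> omega
  rcases key with ⟨rfl, h⟩ | ⟨h₁, h₂⟩ | ⟨h₁, h₂⟩ | ⟨h₁, h₂⟩
  · simp [h]
  all_goals rify at h₁ h₂; linear_combination ((j : ℝ) - k) * h₁ + h₂

theorem exists_eigenPrefixSum_succ_ne {n k : ℕ} (hk : k ≤ n) (hk' : k ≠ n / 2) :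
    ∃ i < n, eigenPrefixSum n k (i + 1) ≠ eigenPrefixSum n k i := by
  rcases (by omega : 2 * k + 1 < n ∨ n < 2 * k) with h | h
  · exact ⟨k, by omega, by unfold eigenPrefixSum; split_ifs <;> omega⟩
  · exact ⟨n - k, by omega, by unfold eigenPrefixSum; split_ifs <;> omega⟩

theorem isRoot_charpoly_two_D_add_two_E {n k : ℕ} (hk : k ≤ n) (hk' : k ≠ n / 2) :
    ((2 : ℝ) • Dmat n + (2 : ℝ) • Emat n).charpoly.IsRoot ((2 * k : ℕ) : ℝ) := by
  let S : ℕ → ℝ := fun m => eigenPrefixSum n k m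
  obtain ⟨i, hi, hne⟩ := exists_eigenPrefixSum_succ_ne hk hk'
  have hv : (fun i : Fin n => S (i + 1) - S i) ≠ 0 := fun h =>
    hne (by simpa [S, sub_eq_zero] using congrFun h ⟨i, hi⟩)
  refine isRoot_charpoly_of_mulVec_eq_smul hv ?_
  rw [← smul_add, smul_mulVec, Dmat_add_Emat_mulVec_sub_eq_smul n k S
    (by simp [S, eigenPrefixSum, hk]) fun j hj => eigenPrefixSum_spec hj, smul_smul]
  push_cast; rfl

theorem spectrum_two_D_add_two_E_general (n : ℕ) :
    ((2 : ℝ) • Dmat n + (2 : ℝ) • Emat n).charpoly.roots =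
      ((Finset.range (n + 1)).erase (n / 2)).val.map (fun k => ((2 * k : ℕ) : ℝ)) := by
  have hinj : Function.Injective fun k : ℕ => ((2 * k : ℕ) : ℝ) := fun a b h => by
    simpa using h
  refine roots_eq_of_nodup_of_natDegree_le (charpoly_monic _).ne_zero
    ((Finset.nodup _).map hinj) ?_ ?_
  · rw [charpoly_natDegree_eq_dim, Fintype.card_fin, Multiset.card_map, card_val,
      card_erase_of_mem (by simp; omega), card_range, Nat.add_sub_cancel]
  · simp only [Multiset.mem_map, mem_val, mem_erase, mem_range]
    rintro _ ⟨k, ⟨hk', hk⟩, rfl⟩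
    exact isRoot_charpoly_two_D_add_two_E (by omega) hk'

/-- For every `n ≥ 1`, the spectrum of the real symmetric
matrix `2Dₙ + 2Eₙ` is exactly `{0, 2, 4, …, 2n} \\ {2⌊n/2⌋}`, each of these
`n` numbers being an eigenvalue of multiplicity `1`; stated as an equality of
the multiset of roots of the characteristic polynomial with the multiset of
values `2k`, `k ∈ {0, …, n} \\ {⌊n/2⌋}` (each with multiplicity one). -/
theorem spectrum_two_D_add_two_E (n : ℕ) (hn : 1 ≤ n) :
    ((2 : ℝ) • Dmat n + (2 : ℝ) • Emat n).charpoly.roots =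
      ((Finset.range (n + 1)).erase (n / 2)).val.map (fun k => ((2 * k : ℕ) : ℝ)) :=
  spectrum_two_D_add_two_E_general n
end

section
/- Let m ≡ 0 (mod 4) and n ≥ 2 be integers. Then every even integer 2k with 0 ≤ k ≤ n is an eigenvalue of the adjacency matrix of the generalised pancake graph P_m(n). -/
/-!
Fix a colour weight `c : ℤ/mℤ → ℝ` with `c (i + 1) + c (i - 1) = 0`, a position `p` and a
letter `a`, and put `f σ = c (χ p)` if `ψ p = a` and `f σ = 0` otherwise. A prefix reversal
of length `j ≤ p` fixes position `p`, so the `2p` neighbours `r_j^{±1} σ` with `j ≤ p` all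
take the value `f σ`; for `j > p` the reversals `r_j^{+1}` and `r_j^{-1}` bring the same entry
to position `p` with colours differing by `2`, and their contributions cancel. Hence `f` is an
eigenvector for `2p`, `0 ≤ p < n` (positions are 0-indexed). When `4 ∣ m`, the real part of an
additive character of `ℤ/mℤ` sending `1` to `i`, that is `x ↦ cos (π x / 2)`, is such a
nonzero weight. The last eigenvalue `2n` is the degree of the regular graph `𝒫_m(n)`.
-/

open Polynomial

open Finset Matrix

theorem Matrix.isRoot_charpoly_of_mulVec_eq_smul_s16 {ι R : Type*} [Fintype ι] [DecidableEq ι]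
    [CommRing R] [IsDomain R] {M : Matrix ι ι R} {μ : R} {v : ι → R} (hv : v ≠ 0)
    (h : M *ᵥ v = μ • v) : M.charpoly.IsRoot μ := by
  rw [← Matrix.charpoly_toLin', ← Module.End.hasEigenvalue_iff_isRoot_charpoly]
  exact Module.End.hasEigenvalue_of_hasEigenvector
    ⟨Module.End.mem_eigenspace_iff.mpr (by simpa using h), hv⟩

theorem AddChar.re_map_add_add_re_map_sub_eq_zero {A : Type*} [AddCommGroup A]
    (ψ : AddChar A ℂ) {a : A} (ha : ψ a = Complex.I) (x : A) :
    (ψ (x + a)).re + (ψ (x - a)).re = 0 := by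
  rw [← Complex.add_re, ψ.map_add_eq_mul, ψ.map_sub_eq_div, ha, div_eq_mul_inv,
    Complex.inv_I, ← mul_add, add_neg_cancel, mul_zero, Complex.zero_re]

theorem ZMod.exists_addChar_map_one_eq_I {m : ℕ} [NeZero m] (h : 4 ∣ m) :
    ∃ ψ : AddChar (ZMod m) ℂ, ψ 1 = Complex.I := by
  obtain ⟨q, rfl⟩ := h
  have hI : Complex.I ^ (4 * q) = 1 := by rw [pow_mul, Complex.I_pow_four, one_pow]
  refine ⟨AddChar.zmodChar _ hI, ?_⟩
  simpa using AddChar.zmodChar_apply' hI 1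

theorem ZMod.two_ne_zero_of_four_dvd {m : ℕ} (h : 4 ∣ m) : (2 : ZMod m) ≠ 0 := by
  intro h2
  have hm2 : m ∣ 2 := (ZMod.natCast_eq_zero_iff 2 m).mp (by exact_mod_cast h2)
  have := Nat.le_of_dvd two_pos (h.trans hm2)
  omega

namespace ColouredPerm

variable {m n j : ℕ}

theorem flipPerm_apply_of_lt {t : Fin n} (ht : t.val < j) (hj : j ≤ n) :
    flipPerm n j t = ⟨j - 1 - t.val, by omega⟩ :=
  dif_pos ⟨ht, hj⟩

theorem flipPerm_apply_of_le {t : Fin n} (ht : j ≤ t.val) : flipPerm n j t = t :=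
  dif_neg (by omega)

theorem flipPerm_apply_lt_iff (t : Fin n) : (flipPerm n j t).val < j ↔ t.val < j := by
  show (flipFun n j t).val < j ↔ _
  unfold flipFun
  split_ifs with h
  · simp only [h.1, iff_true]
    omega
  · rfl

theorem flipPerm_apply_flipPerm_apply (t : Fin n) : flipPerm n j (flipPerm n j t) = t :=
  flipFun_involutive n j t

theorem prefixRev_fst_apply (ε : ZMod m) (σ : ColouredPerm m n) (t : Fin n) :
    (prefixRev m n j ε σ).1 t = if t.val < j then σ.1 (flipPerm n j t) + ε else σ.1 t :=
  rfl

theorem prefixRev_snd_apply (ε : ZMod m) (σ : ColouredPerm m n) (t : Fin n) :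
    (prefixRev m n j ε σ).2 t = σ.2 (flipPerm n j t) :=
  rfl

theorem prefixRev_apply_of_le (ε : ZMod m) (σ : ColouredPerm m n) {t : Fin n}
    (ht : j ≤ t.val) :
    (prefixRev m n j ε σ).1 t = σ.1 t ∧ (prefixRev m n j ε σ).2 t = σ.2 t := by
  rw [prefixRev_fst_apply, prefixRev_snd_apply, if_neg (by omega), flipPerm_apply_of_le ht]
  exact ⟨rfl, rfl⟩

theorem prefixRev_apply_of_lt (ε : ZMod m) (σ : ColouredPerm m n) {t : Fin n}
    (ht : t.val < j) (hj : j ≤ n) :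
    (prefixRev m n j ε σ).1 t = σ.1 ⟨j - 1 - t.val, by omega⟩ + ε ∧
      (prefixRev m n j ε σ).2 t = σ.2 ⟨j - 1 - t.val, by omega⟩ := by
  rw [prefixRev_fst_apply, prefixRev_snd_apply, if_pos ht, flipPerm_apply_of_lt ht hj]
  exact ⟨rfl, rfl⟩

theorem prefixRev_neg_prefixRev (ε : ZMod m) (σ : ColouredPerm m n) :
    prefixRev m n j (-ε) (prefixRev m n j ε σ) = σ := by
  refine Prod.ext (funext fun t => ?_) ?_
  · rw [prefixRev_fst_apply]
    split_ifs with ht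
    · rw [prefixRev_fst_apply, if_pos ((flipPerm_apply_lt_iff t).mpr ht),
        flipPerm_apply_flipPerm_apply, add_neg_cancel_right]
    · rw [prefixRev_fst_apply, if_neg ht]
  · exact Equiv.ext fun t => congrArg σ.2 (flipPerm_apply_flipPerm_apply t)

theorem prefixRev_ne_self (hj0 : 0 < j) (hjn : j ≤ n) {ε : ZMod m} (hε : ε + ε ≠ 0)
    (σ : ColouredPerm m n) : prefixRev m n j ε σ ≠ σ := by
  intro h
  have h0 := (prefixRev_apply_of_lt ε σ (t := ⟨0, by omega⟩) hj0 hjn).1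
  have h1 := (prefixRev_apply_of_lt ε σ (t := ⟨j - 1, by omega⟩) (by simp; omega) hjn).1
  rw [h] at h0 h1
  simp only [Nat.sub_zero, Nat.sub_self] at h0 h1
  exact hε (by linear_combination -(h0 + h1))

theorem prefixRev_inj {j' : ℕ} (hj0 : 0 < j) (hjn : j ≤ n) (hj0' : 0 < j') (hjn' : j' ≤ n)
    {ε ε' : ZMod m} (σ : ColouredPerm m n) :
    prefixRev m n j ε σ = prefixRev m n j' ε' σ ↔ j = j' ∧ ε = ε' := by
  refine ⟨fun h => ?_, by rintro ⟨rfl, rfl⟩; rfl⟩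
  have hflip : flipPerm n j = flipPerm n j' := mul_left_cancel (congrArg Prod.snd h)
  have hjj' : j = j' := by
    have := congrArg (fun e : Equiv.Perm (Fin n) => (e ⟨0, by omega⟩).val) hflip
    simp only [flipPerm_apply_of_lt (t := ⟨0, _⟩) hj0 hjn,
      flipPerm_apply_of_lt (t := ⟨0, _⟩) hj0' hjn'] at this
    omega
  subst hjj'
  have h0 := congrFun (congrArg Prod.fst h) ⟨0, by omega⟩
  rw [(prefixRev_apply_of_lt ε σ hj0 hjn).1, (prefixRev_apply_of_lt ε' σ hj0 hjn).1] at h0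
  exact ⟨rfl, add_left_cancel h0⟩

theorem pancakeAdj_iff (h2 : (2 : ZMod m) ≠ 0) (σ τ : ColouredPerm m n) :
    pancakeAdj m n σ τ ↔
      ∃ q ∈ Ioc 0 n ×ˢ ({1, -1} : Finset (ZMod m)), prefixRev m n q.1 q.2 σ = τ := by
  simp only [mem_product, mem_Ioc, mem_insert, mem_singleton, Prod.exists]
  constructor
  · rintro ⟨-, j, hj0, hjn, ε, hε, rfl | rfl⟩
    · exact ⟨j, ε, ⟨⟨hj0, hjn⟩, hε⟩, rfl⟩
    · refine ⟨j, -ε, ⟨⟨hj0, hjn⟩, ?_⟩, prefixRev_neg_prefixRev ε τ⟩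
      rcases hε with rfl | rfl <;> simp
  · rintro ⟨j, ε, ⟨⟨hj0, hjn⟩, hε⟩, rfl⟩
    have hεε : ε + ε ≠ 0 := by
      rcases hε with rfl | rfl
      · rwa [one_add_one_eq_two]
      · rwa [← neg_add, one_add_one_eq_two, neg_ne_zero]
    exact ⟨(prefixRev_ne_self hj0 hjn hεε σ).symm, j, hj0, hjn, ε, hε, Or.inl rfl⟩

end ColouredPerm

open ColouredPerm

theorem pancakeAdjMatrix_mulVec_apply {m n : ℕ} [NeZero m] (h2 : (2 : ZMod m) ≠ 0)
    (f : ColouredPerm m n → ℝ) (σ : ColouredPerm m n) :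
    (pancakeAdjMatrix m n *ᵥ f) σ =
      ∑ j ∈ Ioc 0 n, (f (prefixRev m n j 1 σ) + f (prefixRev m n j (-1) σ)) := by
  classical
  have hneighbours : univ.filter (pancakeAdj m n σ) =
      (Ioc 0 n ×ˢ {1, -1}).image fun q => prefixRev m n q.1 q.2 σ := by
    ext τ
    simp only [mem_filter, mem_univ, true_and, mem_image, pancakeAdj_iff h2]
  have hinj : Set.InjOn (fun q : ℕ × ZMod m => prefixRev m n q.1 q.2 σ)
      (Ioc 0 n ×ˢ ({1, -1} : Finset (ZMod m)) : Finset _) := by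
    rintro ⟨j, ε⟩ hq ⟨j', ε'⟩ hq' h
    simp only [coe_product, Set.mem_prod, coe_Ioc, Set.mem_Ioc] at hq hq'
    obtain ⟨rfl, rfl⟩ := (prefixRev_inj hq.1.1 hq.1.2 hq'.1.1 hq'.1.2 σ).mp h
    rfl
  have hne : (1 : ZMod m) ≠ -1 := fun h => h2 (by linear_combination h)
  calc (pancakeAdjMatrix m n *ᵥ f) σ = ∑ τ ∈ univ.filter (pancakeAdj m n σ), f τ := by
        simp [mulVec, dotProduct, pancakeAdjMatrix, sum_filter]
    _ = ∑ q ∈ Ioc 0 n ×ˢ {1, -1}, f (prefixRev m n q.1 q.2 σ) := by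
        rw [hneighbours, sum_image hinj]
    _ = _ := by
        rw [sum_product]
        simp only [sum_pair hne]

theorem pancakeAdjMatrix_mulVec_one {m n : ℕ} [NeZero m] (h2 : (2 : ZMod m) ≠ 0) :
    pancakeAdjMatrix m n *ᵥ 1 = (2 * n : ℝ) • 1 := by
  funext σ
  simp [pancakeAdjMatrix_mulVec_apply h2]
  ring

def pancakeEigenvector {m n : ℕ} (c : ZMod m → ℝ) (p a : Fin n) (σ : ColouredPerm m n) :
    ℝ :=
  if σ.2 p = a then c (σ.1 p) else 0

section pancakeEigenvector

variable {m n j : ℕ} {c : ZMod m → ℝ} {p a : Fin n}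

theorem pancakeEigenvector_ne_zero {i : ZMod m} (hi : c i ≠ 0) : pancakeEigenvector c p a ≠ 0 :=
  fun h => hi (by simpa [pancakeEigenvector] using congrFun h (fun _ => i, Equiv.swap a p))

theorem pancakeEigenvector_prefixRev_of_le (ε : ZMod m) (σ : ColouredPerm m n)
    (hj : j ≤ p.val) :
    pancakeEigenvector c p a (prefixRev m n j ε σ) = pancakeEigenvector c p a σ := by
  obtain ⟨hχ, hψ⟩ := prefixRev_apply_of_le ε σ hj
  rw [pancakeEigenvector, pancakeEigenvector, hχ, hψ]

theorem pancakeEigenvector_prefixRev_one_add_prefixRev_neg_one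
    (hc : ∀ i, c (i + 1) + c (i - 1) = 0) (σ : ColouredPerm m n) (hpj : p.val < j)
    (hjn : j ≤ n) :
    pancakeEigenvector c p a (prefixRev m n j 1 σ) +
      pancakeEigenvector c p a (prefixRev m n j (-1) σ) = 0 := by
  obtain ⟨hχ, hψ⟩ := prefixRev_apply_of_lt 1 σ hpj hjn
  obtain ⟨hχ', hψ'⟩ := prefixRev_apply_of_lt (-1) σ hpj hjn
  rw [pancakeEigenvector, pancakeEigenvector, hχ, hψ, hχ', hψ', ← sub_eq_add_neg]
  split_ifs
  · exact hc _
  · exact add_zero 0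

theorem pancakeAdjMatrix_mulVec_pancakeEigenvector [NeZero m] (h2 : (2 : ZMod m) ≠ 0)
    (hc : ∀ i, c (i + 1) + c (i - 1) = 0) (p a : Fin n) :
    pancakeAdjMatrix m n *ᵥ pancakeEigenvector c p a =
      (2 * p.val : ℝ) • pancakeEigenvector c p a := by
  set f := pancakeEigenvector c p a
  funext σ
  calc (pancakeAdjMatrix m n *ᵥ f) σ
        = ∑ j ∈ Ioc 0 (p : ℕ), (f (prefixRev m n j 1 σ) + f (prefixRev m n j (-1) σ)) +
            ∑ j ∈ Ioc (p : ℕ) n,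
              (f (prefixRev m n j 1 σ) + f (prefixRev m n j (-1) σ)) := by
        rw [pancakeAdjMatrix_mulVec_apply h2, sum_Ioc_consecutive _ (Nat.zero_le _) p.is_lt.le]
    _ = ∑ j ∈ Ioc 0 (p : ℕ), 2 * f σ + ∑ j ∈ Ioc (p : ℕ) n, 0 := by
        congr 1 <;> refine sum_congr rfl fun j hj => ?_ <;> rw [mem_Ioc] at hj
        · have hfix (ε : ZMod m) : f (prefixRev m n j ε σ) = f σ :=
            pancakeEigenvector_prefixRev_of_le ε σ hj.2
          rw [hfix, hfix, two_mul]
        · exact pancakeEigenvector_prefixRev_one_add_prefixRev_neg_one hc σ hj.1 hj.2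
    _ = (2 * p.val : ℝ) • f σ := by
        simp only [sum_const, Nat.card_Ioc, Nat.sub_zero, nsmul_eq_mul, smul_eq_mul]
        ring

end pancakeEigenvector

/-- For `m ≡ 0 (mod 4)` (with `m ≥ 1`) and `n ≥ 2`, every
even integer `2k` with `0 ≤ k ≤ n` is an eigenvalue of the adjacency matrix of
`𝒫_m(n)`, i.e. a root of its characteristic polynomial. -/
theorem pancake_even_integral_eigenvalues (m n : ℕ) (hm1 : 1 ≤ m)
    (hm4 : m % 4 = 0) (k : ℕ) (hk : k ≤ n) :
    haveI : NeZero m := ⟨by omega⟩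
    (pancakeAdjMatrix m n).charpoly.IsRoot ((2 * k : ℕ) : ℝ) := by
  have : NeZero m := ⟨by omega⟩
  have h4 : 4 ∣ m := Nat.dvd_of_mod_eq_zero hm4
  have h2 := ZMod.two_ne_zero_of_four_dvd h4
  push_cast
  rcases hk.lt_or_eq with hkn | rfl
  · obtain ⟨ψ, hψ⟩ := ZMod.exists_addChar_map_one_eq_I h4
    have hψ0 : (ψ 0).re ≠ 0 := by simp
    exact Matrix.isRoot_charpoly_of_mulVec_eq_smul_s16 (pancakeEigenvector_ne_zero hψ0)
      (pancakeAdjMatrix_mulVec_pancakeEigenvector (c := fun i => (ψ i).re) h2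
        (ψ.re_map_add_add_re_map_sub_eq_zero hψ) ⟨k, hkn⟩ ⟨k, hkn⟩)
  · exact Matrix.isRoot_charpoly_of_mulVec_eq_smul_s16 one_ne_zero (pancakeAdjMatrix_mulVec_one h2)
end
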